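/- arXiv:2402.05907 — 6 statements merged into one kernel-verified Lean document; each statement's English description precedes it below -/
import Mathlib

section
/- Let ≪ and ≤ be two relations on a set X such that: ≤ is a preorder, ≪ is contained in ≤, ≪ is transitive, and the push-up property holds (a ≪ b ≤ c implies a ≪ c, and a ≤ b ≪ c implies a ≪ c). Suppose X is a topological space, ≪ is an open relation (for each pair a ≪ b there are open neighborhoods U ∋ a, V ∋ b with U × V ⊆ ≪), and ≪ is dense in the sense that a ≪ b implies existence of c with a ≪ c ≪ b. Define I⁺(A) = {x : ∃ a ∈ A, a ≪ x} and J⁺(A) = {x : ∃ a ∈ A, a ≤ x}. Then for any A ⊆ X: closure(J⁺(A)) = closure(I⁺(A)) and interior(J⁺(A)) = I⁺(A); in particular their topological boundaries coincide. -/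
/-- Abstract causal-space version of the structural properties of futures:
for an open, transitive, dense chronology `≪` contained in a causal preorder `≤`
with push-up and local nontriviality, the closure of the causal future equals
the closure of the chronological future, the interior of the causal future is
the chronological future, and hence their boundaries agree. -/
theorem stmt_7 {X : Type*} [TopologicalSpace X] (lt le : X → X → Prop)
    (hrefl : ∀ x, le x x) (htrans : ∀ a b c, le a b → le b c → le a c)
    (hsub : ∀ a b, lt a b → le a b)
    (hlt_trans : ∀ a b c, lt a b → lt b c → lt a c)
    (hopen : ∀ a b, lt a b → ∃ U V : Set X, IsOpen U ∧ IsOpen V ∧ a ∈ U ∧ b ∈ V ∧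
      ∀ u ∈ U, ∀ v ∈ V, lt u v)
    (hdense : ∀ a b, lt a b → ∃ c, lt a c ∧ lt c b)
    (hlocal : ∀ x : X, ∀ U : Set X, IsOpen U → x ∈ U →
      (∃ y ∈ U, lt y x) ∧ (∃ z ∈ U, lt x z))
    (hpushup₁ : ∀ a b c, lt a b → le b c → lt a c)
    (hpushup₂ : ∀ a b c, le a b → lt b c → lt a c)
    (A : Set X) :
    closure {x | ∃ a ∈ A, le a x} = closure {x | ∃ a ∈ A, lt a x} ∧
    interior {x | ∃ a ∈ A, le a x} = {x | ∃ a ∈ A, lt a x} ∧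
    frontier {x | ∃ a ∈ A, le a x} = frontier {x | ∃ a ∈ A, lt a x} := by
  set I := {x | ∃ a ∈ A, lt a x} with hI
  set J := {x | ∃ a ∈ A, le a x} with hJ
  have hIJ : I ⊆ J := fun x ⟨a, ha, h⟩ => ⟨a, ha, hsub _ _ h⟩
  have hIopen : IsOpen I := by
    rw [isOpen_iff_forall_mem_open]
    rintro x ⟨a, ha, h⟩
    obtain ⟨U, V, hU, hV, haU, hxV, hUV⟩ := hopen a x h
    exact ⟨V, fun v hv => ⟨a, ha, hUV a haU v hv⟩, hV, hxV⟩
  have hJCl : J ⊆ closure I := by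
    rintro x ⟨a, ha, h⟩
    rw [mem_closure_iff]
    intro U hU hxU
    obtain ⟨-, z, hzU, hz⟩ := hlocal x U hU hxU
    exact ⟨z, hzU, a, ha, hpushup₂ a x z h hz⟩
  have hcl : closure J = closure I := by
    apply le_antisymm
    · exact closure_minimal hJCl isClosed_closure
    · exact closure_mono hIJ
  have hint : interior J = I := by
    apply le_antisymm
    · intro x hx
      obtain ⟨U, hUJ, hU, hxU⟩ := mem_interior.mp hx
      obtain ⟨⟨y, hyU, hy⟩, -⟩ := hlocal x U hU hxU
      obtain ⟨a, ha, hay⟩ := hUJ hyU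
      exact ⟨a, ha, hpushup₂ a y x hay hy⟩
    · exact interior_maximal hIJ hIopen
  refine ⟨hcl, hint, ?_⟩
  unfold frontier
  rw [hcl, hint, hIopen.interior_eq]
end

section
/- Let X be a topological space with relations ≪ ⊆ ≤ satisfying transitivity of ≤ and the push-up property. If X is 'transversely strongly causal' in the sense that for every x and every open U ∋ x there exists an open V with x ∈ V ⊆ U such that whenever a, b ∈ V and a ≤ c ≤ b then c ∈ U, and if X is T1, then X is future-distinguishing: for all x, y, if x ≤ y and x ∈ closure(J⁺(y)) then x = y (where J⁺(y) = {z : y ≤ z}). -/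
/-- A transversely strongly causal, T1 abstract causal space is
future-distinguishing: if `x ≤ y` and `x` lies in the closure of the causal
future of `y`, then `x = y`. -/
theorem stmt_8 {X : Type*} [TopologicalSpace X] [T1Space X] (lt le : X → X → Prop)
    (hrefl : ∀ x, le x x) (htrans : ∀ a b c, le a b → le b c → le a c)
    (hsub : ∀ a b, lt a b → le a b)
    (hlt_trans : ∀ a b c, lt a b → lt b c → lt a c)
    (hpushup₁ : ∀ a b c, lt a b → le b c → lt a c)
    (hpushup₂ : ∀ a b c, le a b → lt b c → lt a c)
    (hsc : ∀ x : X, ∀ U : Set X, IsOpen U → x ∈ U →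
      ∃ V : Set X, IsOpen V ∧ x ∈ V ∧ V ⊆ U ∧
        ∀ a ∈ V, ∀ b ∈ V, ∀ c, le a c → le c b → c ∈ U) :
    ∀ x y : X, le x y → x ∈ closure {z | le y z} → x = y := by
  intro x y hxy hcl
  by_contra hne
  obtain ⟨V, hVopen, hxV, hVU, hconv⟩ := hsc x {y}ᶜ (isOpen_compl_singleton) hne
  obtain ⟨z, hzV, hyz⟩ := mem_closure_iff.mp hcl V hVopen hxV
  exact hconv x hxV z hzV y hxy hyz rfl
end

section
/- Let X be a topological space with relations ≪ ⊆ ≤ where ≪ is open, transitive, dense (x ≪ y → ∃ z, x ≪ z ≪ y), has the push-up property relative to ≤, and every point has nonempty chronological future and past with points arbitrarily nearby. If X satisfies the strong causality condition (for every x and open U ∋ x there is open V with x ∈ V ⊆ U such that a, b ∈ V and a ≤ c ≤ b imply c ∈ U), then the sets I⁺(a) ∩ I⁻(b) := {x : a ≪ x ≪ b}, for a, b ∈ X, form a basis for the topology of X. -/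
/-- In a strongly causal abstract causal space, the chronological diamonds
`I⁺(a) ∩ I⁻(b) = {x | a ≪ x ≪ b}` form a basis for the topology
(the Alexandrov topology coincides with the given topology). -/
theorem stmt_10 {X : Type*} [TopologicalSpace X] (lt le : X → X → Prop)
    (hrefl : ∀ x, le x x) (htrans : ∀ a b c, le a b → le b c → le a c)
    (hsub : ∀ a b, lt a b → le a b)
    (hlt_trans : ∀ a b c, lt a b → lt b c → lt a c)
    (hopen : ∀ a b, lt a b → ∃ U V : Set X, IsOpen U ∧ IsOpen V ∧ a ∈ U ∧ b ∈ V ∧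
      ∀ u ∈ U, ∀ v ∈ V, lt u v)
    (hdense : ∀ a b, lt a b → ∃ c, lt a c ∧ lt c b)
    (hlocal : ∀ x : X, ∀ U : Set X, IsOpen U → x ∈ U →
      (∃ y ∈ U, lt y x) ∧ (∃ z ∈ U, lt x z))
    (hpushup₁ : ∀ a b c, lt a b → le b c → lt a c)
    (hpushup₂ : ∀ a b c, le a b → lt b c → lt a c)
    (hsc : ∀ x : X, ∀ U : Set X, IsOpen U → x ∈ U →
      ∃ V : Set X, IsOpen V ∧ x ∈ V ∧ V ⊆ U ∧
        ∀ a ∈ V, ∀ b ∈ V, ∀ c, le a c → le c b → c ∈ U) :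
    TopologicalSpace.IsTopologicalBasis
      {s : Set X | ∃ a b : X, s = {x | lt a x ∧ lt x b}} := by
  apply TopologicalSpace.isTopologicalBasis_of_isOpen_of_nhds
  · rintro s ⟨a, b, rfl⟩
    rw [isOpen_iff_mem_nhds]
    intro x ⟨hax, hxb⟩
    obtain ⟨U, V, hU, hV, haU, hxV, hUV⟩ := hopen a x hax
    obtain ⟨U', V', hU', hV', hxU', hbV', hUV'⟩ := hopen x b hxb
    refine Filter.mem_of_superset ((hV.inter hU').mem_nhds ⟨hxV, hxU'⟩) ?_
    rintro w ⟨hw1, hw2⟩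
    exact ⟨hUV a haU w hw1, hUV' w hw2 b hbV'⟩
  · intro x U hxU hU
    obtain ⟨V, hV, hxV, hVU, hVprop⟩ := hsc x U hU hxU
    obtain ⟨⟨y, hyV, hyx⟩, ⟨z, hzV, hxz⟩⟩ := hlocal x V hV hxV
    refine ⟨{w | lt y w ∧ lt w z}, ⟨y, z, rfl⟩, ⟨hyx, hxz⟩, ?_⟩
    rintro w ⟨hyw, hwz⟩
    exact hVprop y hyV z hzV w (hsub _ _ hyw) (hsub _ _ hwz)
end

section
/- Strong-causality disprisonment, abstract version: let X be a topological space with relations ≪ ⊆ ≤ as above satisfying strong causality. Let γ : [a, b) → X be a continuous curve that is future-directed causal (s ≤ t implies γ(s) ≤ γ(t)) and right-inextendible (γ has no limit point as s → b: there is no L ∈ X such that for every open U ∋ L there is s₀ with γ(s) ∈ U for all s ≥ s₀). Then γ cannot remain in or keep returning to a compact set K containing γ(a): there exists s₀ ∈ (a,b) such that γ(s) ∉ K for all s ≥ s₀. -/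
/-- Disprisonment under strong causality: a future-directed, right-inextendible
continuous causal curve `γ : [a,b) → X` starting in a compact set `K` eventually
leaves `K` permanently. -/
theorem stmt_11 {X : Type*} [TopologicalSpace X] (le : X → X → Prop)
    (hrefl : ∀ x, le x x) (htrans : ∀ x y z, le x y → le y z → le x z)
    (hsc : ∀ x : X, ∀ U : Set X, IsOpen U → x ∈ U →
      ∃ V : Set X, IsOpen V ∧ x ∈ V ∧ V ⊆ U ∧
        ∀ a ∈ V, ∀ b ∈ V, ∀ c, le a c → le c b → c ∈ U)
    (a b : ℝ) (hab : a < b) (γ : ℝ → X)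
    (hcont : ContinuousOn γ (Set.Ico a b))
    (hcausal : ∀ s t : ℝ, a ≤ s → s ≤ t → t < b → le (γ s) (γ t))
    (hinext : ¬ ∃ L : X, ∀ U : Set X, IsOpen U → L ∈ U →
      ∃ s₀ ∈ Set.Ico a b, ∀ s, s₀ ≤ s → s < b → γ s ∈ U)
    (K : Set X) (hK : IsCompact K) (hstart : γ a ∈ K) :
    ∃ s₀ ∈ Set.Ioo a b, ∀ s, s₀ ≤ s → s < b → γ s ∉ K := by
  by_contra h
  push_neg at h
  -- From the negation: for every `s₀ ∈ (a,b)` there is `s ∈ [s₀, b)` with `γ s ∈ K`.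
  -- Strengthen: for every `c < b` there is `s ∈ (c, b)` with `a ≤ s` and `γ s ∈ K`.
  have hret : ∀ c : ℝ, c < b → ∃ s, s ∈ Set.Ioo c b ∧ a ≤ s ∧ γ s ∈ K := by
    intro c hc
    set t : ℝ := max ((a + b) / 2) ((c + b) / 2) with ht
    have hta : a < t := lt_of_lt_of_le (by linarith) (le_max_left _ _)
    have htc : c < t := lt_of_lt_of_le (by linarith) (le_max_right _ _)
    have htb : t < b := max_lt (by linarith) (by linarith)
    obtain ⟨s, hts, hsb, hsK⟩ := h t ⟨hta, htb⟩
    exact ⟨s, ⟨lt_of_lt_of_le htc hts, hsb⟩, le_of_lt (lt_of_lt_of_le hta hts), hsK⟩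
  -- The filter of times near `b` where γ is in K
  set S : Set ℝ := {s | a ≤ s ∧ γ s ∈ K} with hS
  set l : Filter ℝ := nhdsWithin b (Set.Iio b) ⊓ Filter.principal S with hl
  have hlne : l.NeBot := by
    rw [hl, Filter.inf_principal_neBot_iff]
    intro U hU
    obtain ⟨c, hcb, hsub⟩ := mem_nhdsLT_iff_exists_Ioo_subset.mp hU
    obtain ⟨s, hs1, hs2, hs3⟩ := hret c hcb
    exact ⟨s, hsub hs1, hs2, hs3⟩
  have hmaple : Filter.map γ l ≤ Filter.principal K := by
    rw [Filter.le_principal_iff, Filter.mem_map]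
    apply Filter.mem_of_superset (Filter.mem_inf_of_right (Filter.mem_principal_self S))
    intro s hs; exact hs.2
  obtain ⟨L, hLK, hLcl⟩ := hK.exists_clusterPt (f := Filter.map γ l) hmaple
  -- cluster point gives: for every open V ∋ L and c < b, a time s ∈ (c,b) ∩ S with γ s ∈ V
  have hfreq : ∀ V : Set X, IsOpen V → L ∈ V → ∀ c : ℝ, c < b →
      ∃ s, s ∈ Set.Ioo c b ∧ a ≤ s ∧ γ s ∈ K ∧ γ s ∈ V := by
    intro V hV hLV c hcb
    have h1 : V ∈ nhds L := hV.mem_nhds hLV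
    have h2 : γ '' (Set.Ioo c b ∩ S) ∈ Filter.map γ l := by
      rw [Filter.mem_map]
      exact Filter.mem_of_superset
        (Filter.inter_mem
          (Filter.mem_inf_of_left (Ioo_mem_nhdsLT hcb))
          (Filter.mem_inf_of_right (Filter.mem_principal_self S)))
        (Set.subset_preimage_image γ _)
    obtain ⟨x, hxV, hxI⟩ := (clusterPt_iff_nonempty.mp hLcl h1 h2)
    obtain ⟨s, ⟨hsI, hsS⟩, hsx⟩ := hxI
    exact ⟨s, hsI, hsS.1, hsS.2, hsx ▸ hxV⟩
  -- Now L is a right limit point of γ, contradicting hinext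
  apply hinext
  refine ⟨L, fun U hU hLU => ?_⟩
  obtain ⟨V, hVopen, hLV, hVU, hVprop⟩ := hsc L U hU hLU
  obtain ⟨s₁, hs₁I, hs₁a, _, hs₁V⟩ := hfreq V hVopen hLV a hab
  refine ⟨s₁, ⟨hs₁a, hs₁I.2⟩, fun s hs₁s hsb => ?_⟩
  obtain ⟨s₂, hs₂I, hs₂a, _, hs₂V⟩ := hfreq V hVopen hLV s hsb
  exact hVprop (γ s₁) hs₁V (γ s₂) hs₂V (γ s)
    (hcausal s₁ s hs₁a hs₁s hsb)
    (hcausal s s₂ (le_trans hs₁a hs₁s) (le_of_lt hs₂I.1) hs₂I.2)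
end

section
/- In a topological space X with an open transitive relation ≪ having the properties of a chronology relation, define a set A ⊆ X to be achronal if no two points of A are ≪-related. Then for any set S ⊆ X, the boundary ∂I⁺(S) of the chronological future I⁺(S) = {x : ∃ s ∈ S, s ≪ x} is achronal. -/
/-- The boundary of the chronological future of any set is achronal, for any open
transitive chronology relation. -/
theorem stmt_12 {X : Type*} [TopologicalSpace X] (lt : X → X → Prop)
    (hopen : IsOpen {p : X × X | lt p.1 p.2})
    (htrans : ∀ a b c, lt a b → lt b c → lt a c)
    (S : Set X) :
    ∀ x ∈ frontier {y | ∃ s ∈ S, lt s y},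
      ∀ y ∈ frontier {y | ∃ s ∈ S, lt s y}, ¬ lt x y := by
  set I : Set X := {y | ∃ s ∈ S, lt s y} with hI
  have hIopen : IsOpen I := by
    have : I = ⋃ s ∈ S, {y | lt s y} := by
      ext y; simp [hI]
    rw [this]
    refine isOpen_biUnion fun s _ => ?_
    have := hopen.preimage (continuous_const.prodMk continuous_id : Continuous fun y : X => (s, y))
    exact this
  intro x hx y hy hxy
  -- y ∉ I since I open
  have hyI : y ∉ I := by
    intro h
    exact hy.2 (by rwa [hIopen.interior_eq])
  -- {z | lt z y} is open and contains x
  have hU : IsOpen {z | lt z y} := by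
    have := hopen.preimage (continuous_id.prodMk continuous_const : Continuous fun z : X => (z, y))
    exact this
  have hxcl : x ∈ closure I := hx.1
  rcases mem_closure_iff.1 hxcl _ hU hxy with ⟨z, hzy, hzI⟩
  rcases hzI with ⟨s, hs, hsz⟩
  exact hyI ⟨s, hs, htrans s z y hsz hzy⟩
end

section
/- In the abstract causal-space setting with relations ≪ ⊆ ≤ on a topological space X (≪ open, transitive; ≤ transitive, reflexive; push-up), if X is strongly causal as above and the 'causal prisms' J⁺(x) ∩ J⁻(y) are compact for all x, y (global hyperbolicity), then any future-directed continuous causal curve γ : [a,b) → X without right limit point eventually leaves every causal prism J⁺(x) ∩ J⁻(y) permanently. -/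
/-- In a strongly causal, globally hyperbolic abstract causal space (all causal
prisms `J⁺(x) ∩ J⁻(y)` compact), any future-directed continuous causal curve
without right limit point eventually leaves every causal prism permanently. -/
theorem stmt_18 {X : Type*} [TopologicalSpace X] (lt le : X → X → Prop)
    (hrefl : ∀ x, le x x) (htrans : ∀ a b c, le a b → le b c → le a c)
    (hsub : ∀ a b, lt a b → le a b)
    (hlt_trans : ∀ a b c, lt a b → lt b c → lt a c)
    (hopen : IsOpen {p : X × X | lt p.1 p.2})
    (hpushup₁ : ∀ a b c, lt a b → le b c → lt a c)
    (hpushup₂ : ∀ a b c, le a b → lt b c → lt a c)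
    (hsc : ∀ x : X, ∀ U : Set X, IsOpen U → x ∈ U →
      ∃ V : Set X, IsOpen V ∧ x ∈ V ∧ V ⊆ U ∧
        ∀ a ∈ V, ∀ b ∈ V, ∀ c, le a c → le c b → c ∈ U)
    (hGH : ∀ x y : X, IsCompact {z : X | le x z ∧ le z y})
    (a b : ℝ) (hab : a < b) (γ : ℝ → X)
    (hcont : ContinuousOn γ (Set.Ico a b))
    (hcausal : ∀ s t : ℝ, a ≤ s → s ≤ t → t < b → le (γ s) (γ t))
    (hinext : ¬ ∃ L : X, ∀ U : Set X, IsOpen U → L ∈ U →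
      ∃ s₀ ∈ Set.Ico a b, ∀ s, s₀ ≤ s → s < b → γ s ∈ U) :
    ∀ x y : X, ∃ s₀ ∈ Set.Ico a b, ∀ s, s₀ ≤ s → s < b →
      γ s ∉ {z : X | le x z ∧ le z y} := by
  intro x y
  by_contra h
  push_neg at h
  set K := {z : X | le x z ∧ le z y} with hK
  set l := nhdsWithin b (Set.Ico a b) with hl
  have hlne : l.NeBot := by
    rw [hl, ← mem_closure_iff_nhdsWithin_neBot, closure_Ico hab.ne]
    exact ⟨hab.le, le_refl b⟩
  -- γ frequently lies in K along l
  have hfreq : ∃ᶠ s in l, γ s ∈ K := by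
    rw [Filter.frequently_iff]
    intro W hW
    obtain ⟨ε, hε, hball⟩ := Metric.mem_nhdsWithin_iff.mp hW
    have h1 : max a (b - ε / 2) ∈ Set.Ico a b := by
      constructor
      · exact le_max_left _ _
      · exact max_lt hab (by linarith)
    obtain ⟨s, hs1, hs2, hs3⟩ := h (max a (b - ε / 2)) h1
    refine ⟨s, hball ⟨?_, ?_, hs2⟩, hs3⟩
    · rw [Metric.mem_ball, Real.dist_eq, abs_of_nonpos (by linarith)]
      have := le_trans (le_max_right a (b - ε / 2)) hs1
      linarith
    · exact le_trans (le_max_left _ _) hs1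
  have hne : (Filter.map γ l ⊓ Filter.principal K).NeBot := by
    have h1 : (l ⊓ Filter.principal (γ ⁻¹' K)).NeBot := by
      rwa [Filter.frequently_iff_neBot] at hfreq
    refine Filter.neBot_of_le (f := Filter.map γ (l ⊓ Filter.principal (γ ⁻¹' K))) ?_
    refine le_inf (Filter.map_mono inf_le_left) ?_
    rw [Filter.map_le_iff_le_comap, Filter.comap_principal]
    exact inf_le_right
  obtain ⟨L, hLK, hcl⟩ := (hGH x y).exists_clusterPt (f := Filter.map γ l ⊓ Filter.principal K)
    inf_le_right
  have hcl' : ClusterPt L (Filter.map γ l) := hcl.mono inf_le_left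
  apply hinext
  refine ⟨L, fun U hU hLU => ?_⟩
  obtain ⟨V, hVopen, hLV, hVU, hVprop⟩ := hsc L U hU hLU
  -- frequently γ s ∈ V along l
  have hfreqV : ∃ᶠ s in l, γ s ∈ V := by
    rw [Filter.frequently_iff]
    intro W hW
    obtain ⟨z, hzV, t, htW, rfl⟩ := (clusterPt_iff_nonempty.mp hcl') (hVopen.mem_nhds hLV)
      (Filter.image_mem_map hW)
    exact ⟨t, htW, hzV⟩
  -- pick s₁ ∈ [a,b) with γ s₁ ∈ V
  obtain ⟨s₁, hs₁mem, hs₁V⟩ := Filter.frequently_iff.mp hfreqV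
    (self_mem_nhdsWithin : Set.Ico a b ∈ l)
  refine ⟨s₁, hs₁mem, fun s hss hsb => ?_⟩
  -- pick s₂ ∈ [s, b) with γ s₂ ∈ V
  have hmem2 : Set.Ico s b ∈ l := by
    rw [hl, mem_nhdsWithin]
    exact ⟨Set.Ioi s, isOpen_Ioi, hsb, fun z hz => ⟨hz.1.le, hz.2.2⟩⟩
  obtain ⟨s₂, hs₂mem, hs₂V⟩ := Filter.frequently_iff.mp hfreqV hmem2
  have has : a ≤ s := le_trans hs₁mem.1 hss
  exact hVprop (γ s₁) hs₁V (γ s₂) hs₂V (γ s)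
    (hcausal s₁ s hs₁mem.1 hss hsb) (hcausal s s₂ has hs₂mem.1 hs₂mem.2)
end
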